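/- If U and V are independent standard normal random variables and λ_L ≥ λ_S > 0, then P(λ_S·|V| ≤ λ_L·|U|) = (2/π)·arctan(λ_L/λ_S) ≥ 1/2. -/

import Mathlib

/-!
With `c = λ_L / λ_S` the event is `|V| ≤ c |U|`. Conditioning on `U = u` and substituting
`v = |u| t` turns the Gaussian double integral into `∫_{-c}^{c} dt / (π (1 + t²)) = (2/π) arctan c`,
the inner `u`-integral being elementary after Fubini. Finally `arctan c ≥ arctan 1 = π/4`.
-/

open MeasureTheory ProbabilityTheory Real Set
open scoped NNReal

theorem integral_Ioi_mul_exp_neg_mul_sq {b : ℝ} (hb : 0 < b) :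
    ∫ r in Ioi 0, r * exp (-b * r ^ 2) = (2 * b)⁻¹ := by
  apply Complex.ofReal_injective
  rw [← integral_complex_ofReal]
  push_cast
  exact integral_mul_cexp_neg_mul_sq (by simpa using hb)

theorem exp_neg_mul_sq_mul_intervalIntegral_eq (b c : ℝ) {x : ℝ} (hx : 0 < x) :
    exp (-b * x ^ 2) * ∫ v in -(c * x)..c * x, exp (-b * v ^ 2) =
      ∫ t in -c..c, x * exp (-(b * (1 + t ^ 2)) * x ^ 2) := by
  have hsub := intervalIntegral.integral_comp_mul_left (fun v => exp (-b * v ^ 2)) hx.ne'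
    (a := -c) (b := c)
  rw [mul_neg, mul_comm x c, smul_eq_mul, eq_inv_mul_iff_mul_eq₀ hx.ne'] at hsub
  rw [← hsub, ← intervalIntegral.integral_const_mul, ← intervalIntegral.integral_const_mul]
  congr 1 with t
  rw [mul_left_comm, ← exp_add]
  ring_nf

theorem integrable_mul_exp_neg_mul_one_add_sq {b : ℝ} (hb : 0 < b) (s : Set ℝ)
    [IsFiniteMeasure (volume.restrict s)] :
    Integrable (Function.uncurry fun x t => x * exp (-(b * (1 + t ^ 2)) * x ^ 2))
      ((volume.restrict (Ioi 0)).prod (volume.restrict s)) := by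
  have hdom : Integrable (fun p : ℝ × ℝ => |p.1 * exp (-b * p.1 ^ 2)| * 1)
      ((volume.restrict (Ioi 0)).prod (volume.restrict s)) :=
    (integrable_mul_exp_neg_mul_sq hb).abs.restrict.mul_prod (integrable_const 1)
  refine hdom.mono' (by fun_prop) (ae_of_all _ fun p => ?_)
  simp only [Function.uncurry, norm_mul, norm_eq_abs, abs_mul, abs_exp, mul_one]
  gcongr
  nlinarith [sq_nonneg (p.1 * p.2)]

theorem integral_exp_neg_mul_sq_mul_intervalIntegral_abs {b c : ℝ} (hb : 0 < b) (hc : 0 ≤ c) :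
    ∫ u, exp (-b * u ^ 2) * ∫ v in -(c * |u|)..c * |u|, exp (-b * v ^ 2) =
      2 * arctan c / b := by
  have hc' : -c ≤ c := neg_le_self hc
  calc ∫ u, exp (-b * u ^ 2) * ∫ v in -(c * |u|)..c * |u|, exp (-b * v ^ 2)
      = 2 * ∫ x in Ioi 0, exp (-b * x ^ 2) * ∫ v in -(c * x)..c * x, exp (-b * v ^ 2) := by
        rw [← integral_comp_abs (f := fun x => exp (-b * x ^ 2) * ∫ v in -(c * x)..c * x, _)]
        simp only [sq_abs]
    _ = 2 * ∫ x in Ioi 0, ∫ t in Ioc (-c) c, x * exp (-(b * (1 + t ^ 2)) * x ^ 2) := by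
        congr 1
        refine setIntegral_congr_fun measurableSet_Ioi fun x hx => ?_
        rw [exp_neg_mul_sq_mul_intervalIntegral_eq b c hx, intervalIntegral.integral_of_le hc']
    _ = 2 * ∫ t in Ioc (-c) c, ∫ x in Ioi 0, x * exp (-(b * (1 + t ^ 2)) * x ^ 2) := by
        rw [integral_integral_swap (integrable_mul_exp_neg_mul_one_add_sq hb _)]
    _ = 2 * ∫ t in Ioc (-c) c, (2 * b)⁻¹ * (1 + t ^ 2)⁻¹ := by
        congr 1
        refine setIntegral_congr_fun measurableSet_Ioc fun t _ => ?_
        rw [integral_Ioi_mul_exp_neg_mul_sq (by positivity), ← mul_assoc, mul_inv]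
    _ = 2 * arctan c / b := by
        rw [integral_const_mul, ← intervalIntegral.integral_of_le hc', integral_inv_one_add_sq,
          arctan_neg]
        field_simp
        ring

theorem MeasureTheory.Measure.prod_apply_eq_ofReal_integral {α β : Type*}
    [MeasurableSpace α] [MeasurableSpace β] {μ : Measure α} {ν : Measure β} [IsFiniteMeasure μ] [IsFiniteMeasure ν] {s : Set (α × β)}
    (hs : MeasurableSet s) :
    μ.prod ν s = ENNReal.ofReal (∫ x, ν.real (Prod.mk x ⁻¹' s) ∂μ) := by
  rw [Measure.prod_apply hs, ofReal_integral_eq_lintegral_ofReal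
    (Measure.integrable_measure_prodMk_left hs (measure_ne_top _ _))
    (ae_of_all _ fun _ => measureReal_nonneg)]
  congr with x
  rw [ofReal_measureReal]

theorem gaussianReal_real_Icc {μ : ℝ} {v : ℝ≥0} (hv : v ≠ 0) {a b : ℝ} (hab : a ≤ b) :
    (gaussianReal μ v).real (Icc a b) = ∫ x in a..b, gaussianPDFReal μ v x := by
  rw [measureReal_def, gaussianReal_apply_eq_integral μ hv, ENNReal.toReal_ofReal
    (integral_nonneg (gaussianPDFReal_nonneg μ v)), intervalIntegral.integral_of_le hab,
    integral_Icc_eq_integral_Ioc]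

theorem gaussianPDFReal_zero_eq (v : ℝ≥0) (x : ℝ) :
    gaussianPDFReal 0 v x = (√(2 * π * v))⁻¹ * exp (-(2 * (v : ℝ))⁻¹ * x ^ 2) := by
  rw [gaussianPDFReal, sub_zero, neg_div, div_eq_inv_mul, neg_mul]

theorem gaussianReal_prod_abs_le_mul_abs {v : ℝ≥0} (hv : v ≠ 0) {c : ℝ} (hc : 0 ≤ c) :
    (gaussianReal 0 v).prod (gaussianReal 0 v) {p | |p.2| ≤ c * |p.1|} =
      ENNReal.ofReal (2 / π * arctan c) := by
  have hs : MeasurableSet {p : ℝ × ℝ | |p.2| ≤ c * |p.1|} :=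
    measurableSet_le (by fun_prop) (by fun_prop)
  have hslice (u : ℝ) :
      Prod.mk u ⁻¹' {p : ℝ × ℝ | |p.2| ≤ c * |p.1|} = Icc (-(c * |u|)) (c * |u|) := by
    ext; simp [abs_le]
  rw [Measure.prod_apply_eq_ofReal_integral hs, integral_gaussianReal_eq_integral_smul hv]
  congr 1
  calc _ = ∫ u, (√(2 * π * v))⁻¹ ^ 2 * (exp (-(2 * (v : ℝ))⁻¹ * u ^ 2) *
        ∫ x in -(c * |u|)..c * |u|, exp (-(2 * (v : ℝ))⁻¹ * x ^ 2)) := by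
        congr with u
        rw [hslice, gaussianReal_real_Icc hv (neg_le_self (by positivity)), smul_eq_mul]
        simp only [gaussianPDFReal_zero_eq, intervalIntegral.integral_const_mul]
        ring
    _ = (√(2 * π * v))⁻¹ ^ 2 * ∫ u, exp (-(2 * (v : ℝ))⁻¹ * u ^ 2) *
        ∫ x in -(c * |u|)..c * |u|, exp (-(2 * (v : ℝ))⁻¹ * x ^ 2) := integral_const_mul _ _
    _ = 2 / π * arctan c := by
        rw [integral_exp_neg_mul_sq_mul_intervalIntegral_abs (by positivity) hc, inv_pow,
          sq_sqrt (by positivity)]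
        field_simp

theorem one_half_le_two_div_pi_mul_arctan {c : ℝ} (hc : 1 ≤ c) : 1 / 2 ≤ 2 / π * arctan c := by
  have h : π / 4 ≤ arctan c := arctan_one ▸ arctan_strictMono.monotone hc
  rw [div_mul_eq_mul_div, le_div_iff₀ pi_pos]
  linarith

theorem stmt_7 {Ω : Type*} [MeasurableSpace Ω] (μ : Measure Ω) [IsProbabilityMeasure μ]
    (U V : Ω → ℝ) (hU : Measurable U) (hV : Measurable V)
    (hUV : IndepFun U V μ)
    (hUlaw : Measure.map U μ = gaussianReal 0 1)
    (hVlaw : Measure.map V μ = gaussianReal 0 1)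
    (lS lL : ℝ) (hS : 0 < lS) (hSL : lS ≤ lL) :
    μ {ω | lS * |V ω| ≤ lL * |U ω|} =
      ENNReal.ofReal (2 / Real.pi * Real.arctan (lL / lS)) ∧
    ENNReal.ofReal (1 / 2) ≤ μ {ω | lS * |V ω| ≤ lL * |U ω|} := by
  have hc : 1 ≤ lL / lS := (one_le_div hS).mpr hSL
  have hset : {ω | lS * |V ω| ≤ lL * |U ω|} =
      (fun ω => (U ω, V ω)) ⁻¹' {p | |p.2| ≤ lL / lS * |p.1|} := by
    ext ω
    rw [mem_ofPred_eq, mem_preimage, mem_ofPred_eq, div_mul_eq_mul_div, le_div_iff₀ hS, mul_comm]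
  have hlaw : μ.map (fun ω => (U ω, V ω)) = (gaussianReal 0 1).prod (gaussianReal 0 1) := by
    rw [(indepFun_iff_map_prod_eq_prod_map_map hU.aemeasurable hV.aemeasurable).mp hUV, hUlaw,
      hVlaw]
  have hP : μ {ω | lS * |V ω| ≤ lL * |U ω|} = ENNReal.ofReal (2 / π * arctan (lL / lS)) := by
    rw [hset, ← Measure.map_apply (hU.prodMk hV) (measurableSet_le (by fun_prop) (by fun_prop)),
      hlaw, gaussianReal_prod_abs_le_mul_abs one_ne_zero (by positivity)]
  exact ⟨hP, hP ▸ ENNReal.ofReal_le_ofReal (one_half_le_two_div_pi_mul_arctan hc)⟩
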